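/- For every n : ℕ and every family f : Fin n → ((Fin n → ℕ) → ℕ) of total computable functions (each f i is Computable), there exist naturals u : Fin n → ℕ such that for every i, Nat.Partrec.Code.eval (Denumerable.ofNat Nat.Partrec.Code (u i)) = Nat.Partrec.Code.eval (Denumerable.ofNat Nat.Partrec.Code (f i u)) (a simultaneous n-ary form of Kleene's recursion theorem). -/

import Mathlib

/-!
A single code `c` can carry a whole family of codes: its currying `curry c (encode i)` at each index.
Apply the one-argument recursion theorem `Nat.Partrec.Code.fixed_point₂` to the functional that,
on input `Nat.pair (encode i) x`, runs the `i`-th target code, computed from the family carried by `c`, on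
`x`. The family carried by its fixed point is then a simultaneous fixed point.
-/

open Encodable Denumerable

theorem Computable.fin_curry₁ {α σ : Type*} [Primcodable α] [Primcodable σ] {n : ℕ}
    {f : Fin n → α → σ} : Computable₂ f ↔ ∀ i, Computable (f i) :=
  ⟨fun hf i => hf.comp (Computable.const i) Computable.id, fun hf =>
    (Computable.vector_get.comp ((Computable.vector_ofFn hf).comp Computable.snd)
      Computable.fst).of_eq fun p => by simp⟩

namespace Nat.Partrec.Code

theorem exists_fixed_point_fin {n : ℕ} {F : (Fin n → Code) → Fin n → ℕ →. ℕ}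
    (hF : Partrec₂ fun (cs : Fin n → Code) (p : Fin n × ℕ) => F cs p.1 p.2) :
    ∃ cs : Fin n → Code, ∀ i, eval (cs i) = F cs i := by
  let family : Code → Fin n → Code := fun c i => curry c (encode i)
  have hfamily : Computable family :=
    (Primrec.fin_curry.2 <| primrec₂_curry.comp₂ Primrec₂.left
      (Primrec.encode.comp₂ Primrec₂.right)).to_comp
  let G : Code → ℕ →. ℕ := fun c m =>
    (decode (α := Fin n) m.unpair.1 : Part (Fin n)).bind fun i => F (family c) i m.unpair.2
  have hG : Partrec₂ G :=
    ((Computable.decode.comp (Computable.fst.comp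
      (Computable.unpair.comp Computable.snd))).ofOption).bind
      (hF.comp (hfamily.comp (Computable.fst.comp Computable.fst))
        (Computable.pair Computable.snd
          (Computable.snd.comp (Computable.unpair.comp (Computable.snd.comp Computable.fst)))))
  obtain ⟨c, hc⟩ := fixed_point₂ hG
  refine ⟨family c, fun i => funext fun x => ?_⟩
  simp [family, G, eval_curry, hc]

end Nat.Partrec.Code

open Nat.Partrec Code in
/-- Simultaneous n-ary form of Kleene's recursion theorem: for any finite
family `f 1, …, f n` of total computable functions from `ℕⁿ` to `ℕ` there are
naturals `u 1, …, u n` such that, identifying naturals with codes of partial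
recursive functions, the function coded by `u i` equals the function coded by
`f i u` for every `i`. -/
theorem kleene_recursion (n : ℕ) (f : Fin n → (Fin n → ℕ) → ℕ)
    (hf : ∀ i, Computable (f i)) :
    ∃ u : Fin n → ℕ, ∀ i : Fin n,
      Nat.Partrec.Code.eval (Denumerable.ofNat Nat.Partrec.Code (u i)) =
        Nat.Partrec.Code.eval (Denumerable.ofNat Nat.Partrec.Code (f i u)) := by
  have hencode : Computable fun cs : Fin n → Code => encode ∘ cs :=
    (Primrec.fin_curry.2 (Primrec.encode.comp₂ Primrec.fin_app)).to_comp
  have hF : Partrec₂ fun (cs : Fin n → Code) (p : Fin n × ℕ) =>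
      eval (ofNat Code (f p.1 (encode ∘ cs))) p.2 :=
    eval_part.comp ((Computable.ofNat Code).comp (Computable.fin_curry₁.2 hf |>.comp
      (Computable.fst.comp Computable.snd) (hencode.comp Computable.fst)))
      (Computable.snd.comp Computable.snd)
  obtain ⟨cs, hcs⟩ := exists_fixed_point_fin
    (F := fun cs i => eval (ofNat Code (f i (encode ∘ cs)))) hF
  exact ⟨encode ∘ cs, fun i => by simpa using hcs i⟩
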